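/- arXiv:2504.00602 — 2 statements merged into one kernel-verified Lean document; each statement's English description precedes it below -/
import Mathlib

section
/- A region and its complement generate a sequential component: if r is a region of the marking graph of a 1-safe net system and we add two places p_r and p_{\bar r} corresponding to r and S \ r (with flow determined by the entering/leaving classification of events), then in every reachable marking exactly one of p_r, p_{\bar r} is marked. -/
open scoped Classical

def Enters {S E : Type*} (δ : Set (S × E × S)) (r : Set S) (e : E) : Prop :=
  ∀ s₁ s₂, (s₁, e, s₂) ∈ δ → s₁ ∉ r ∧ s₂ ∈ r

def Leaves {S E : Type*} (δ : Set (S × E × S)) (r : Set S) (e : E) : Prop :=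
  ∀ s₁ s₂, (s₁, e, s₂) ∈ δ → s₁ ∈ r ∧ s₂ ∉ r

def NonCross {S E : Type*} (δ : Set (S × E × S)) (r : Set S) (e : E) : Prop :=
  ∀ s₁ s₂, (s₁, e, s₂) ∈ δ → (s₁ ∈ r ↔ s₂ ∈ r)

def IsRegion {S E : Type*} (δ : Set (S × E × S)) (r : Set S) : Prop :=
  ∀ e : E, Enters δ r e ∨ Leaves δ r e ∨ NonCross δ r e

/-- One step of the net extended with the two places `p_r` and `p_{r̄}` corresponding to
the region `r` and its complement.  A state records the marking-graph state together
with the token counts of the two new places.  The place `p_r` is an input of every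
transition leaving `r` and an output of every transition entering `r`; dually for the
complement region `rᶜ`. -/
def ExtStep {S E : Type*} (δ : Set (S × E × S)) (r : Set S) :
    S × ℕ × ℕ → S × ℕ × ℕ → Prop := fun x y =>
  ∃ e : E, (x.1, e, y.1) ∈ δ ∧
    (Leaves δ r e → 1 ≤ x.2.1) ∧ (Leaves δ rᶜ e → 1 ≤ x.2.2) ∧
    y.2.1 = x.2.1 - (if Leaves δ r e then 1 else 0) + (if Enters δ r e then 1 else 0) ∧
    y.2.2 = x.2.2 - (if Leaves δ rᶜ e then 1 else 0) + (if Enters δ rᶜ e then 1 else 0)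

lemma region_invariant {S E : Type*} (δ : Set (S × E × S))
    (m₀ : S) (r : Set S) (hreg : IsRegion δ r)
    (x : S × ℕ × ℕ)
    (hreach : Relation.ReflTransGen (ExtStep δ r)
      (m₀, (if m₀ ∈ r then 1 else 0), (if m₀ ∈ rᶜ then 1 else 0)) x) :
    (x.1 ∈ r ∧ x.2.1 = 1 ∧ x.2.2 = 0) ∨ (x.1 ∉ r ∧ x.2.1 = 0 ∧ x.2.2 = 1) := by
  induction hreach with
  | refl =>
    by_cases hm : m₀ ∈ r
    · left; simp [hm]
    · right; simp [hm]
  | tail hab hbc ih =>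
    rename_i b c
    obtain ⟨e, hδ, _, _, h1, h2⟩ := hbc
    have hEL : Enters δ rᶜ e ↔ Leaves δ r e := by
      constructor <;> intro h s₁ s₂ hs <;> have := h s₁ s₂ hs <;>
        simp [Set.mem_compl_iff] at this ⊢ <;> tauto
    have hLE : Leaves δ rᶜ e ↔ Enters δ r e := by
      constructor <;> intro h s₁ s₂ hs <;> have := h s₁ s₂ hs <;>
        simp [Set.mem_compl_iff] at this ⊢ <;> tauto
    rcases hreg e with hE | hL | hN
    · -- Enters r
      obtain ⟨hb1, hc1⟩ := hE _ _ hδ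
      have hnL : ¬ Leaves δ r e := fun h => hb1 (h _ _ hδ).1
      rcases ih with ⟨hmem, _, _⟩ | ⟨_, ht1, ht2⟩
      · exact absurd hmem hb1
      · left
        refine ⟨hc1, ?_, ?_⟩
        · rw [h1]; simp [hnL, hE, ht1]
        · rw [h2]; simp [hLE.mpr hE, hEL, hnL, ht2]
    · -- Leaves r
      obtain ⟨hb1, hc1⟩ := hL _ _ hδ
      have hnE : ¬ Enters δ r e := fun h => (h _ _ hδ).1 hb1
      rcases ih with ⟨_, ht1, ht2⟩ | ⟨hmem, _, _⟩
      · right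
        refine ⟨hc1, ?_, ?_⟩
        · rw [h1]; simp [hL, hnE, ht1]
        · rw [h2]; simp [hLE, hnE, hEL.mpr hL, ht2]
      · exact absurd hb1 hmem
    · -- NonCross
      have hiff := hN _ _ hδ
      have hnE : ¬ Enters δ r e := fun h => (h _ _ hδ).1 (hiff.mpr (h _ _ hδ).2)
      have hnL : ¬ Leaves δ r e := fun h => (h _ _ hδ).2 (hiff.mp (h _ _ hδ).1)
      rcases ih with ⟨hmem, ht1, ht2⟩ | ⟨hmem, ht1, ht2⟩
      · left
        refine ⟨hiff.mp hmem, ?_, ?_⟩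
        · rw [h1]; simp [hnE, hnL, ht1]
        · rw [h2]; simp [hLE, hEL, hnE, hnL, ht2]
      · right
        refine ⟨fun h => hmem (hiff.mpr h), ?_, ?_⟩
        · rw [h1]; simp [hnE, hnL, ht1]
        · rw [h2]; simp [hLE, hEL, hnE, hnL, ht2]

/-- A region and its complement generate a sequential component: adding the places
`p_r` and `p_{r̄}` for a region `r` of the marking graph and its complement, in every
reachable marking of the extended net exactly one of the two new places is marked. -/
theorem region_complement_sequential_component {S E : Type*} (δ : Set (S × E × S))
    (m₀ : S) (r : Set S) (hreg : IsRegion δ r)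
    (x : S × ℕ × ℕ)
    (hreach : Relation.ReflTransGen (ExtStep δ r)
      (m₀, (if m₀ ∈ r then 1 else 0), (if m₀ ∈ rᶜ then 1 else 0)) x) :
    (x.2.1 = 1 ∧ x.2.2 = 0) ∨ (x.2.1 = 0 ∧ x.2.2 = 1) := by
  rcases region_invariant δ m₀ r hreg x hreach with ⟨_, h⟩ | ⟨_, h⟩
  · exact Or.inl h
  · exact Or.inr h
end

section
/- Adding a place corresponding to a region does not change the reachability graph: if r is a region of the marking graph of a 1-safe net system Σ, then the net Σ' obtained by adding a place p_r (with flow as dictated by the region's entering/leaving classification, initially marked iff the initial marking belongs to r) has a marking graph isomorphic to that of Σ, via the map sending each reachable marking m of Σ' to its restriction to the original places. -/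
open scoped Classical

section Net

variable {P T : Type*} (pre post : T → Set P) (m₀ : Set P)

/-- `t` is enabled at the (1-safe, set-valued) marking `m`. -/
def Enabled (m : Set P) (t : T) : Prop := pre t ⊆ m

/-- Set-valued firing rule of a 1-safe net. -/
def fireS (m : Set P) (t : T) : Set P := (m \ pre t) ∪ post t

/-- Transition-labeled step relation of the net. -/
def StepT (m : Set P) (t : T) (m' : Set P) : Prop := Enabled pre m t ∧ m' = fireS pre post m t

/-- Step relation of the net. -/
def Step (m m' : Set P) : Prop := ∃ t, StepT pre post m t m'

/-- Reachable markings of the net. -/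
def Reach (m : Set P) : Prop := Relation.ReflTransGen (Step pre post) m₀ m

/-- The arcs of the marking graph of the net. -/
def MGArcs : Set (Set P × T × Set P) :=
  {a | Reach pre post m₀ a.1 ∧ StepT pre post a.1 a.2.1 a.2.2}

/-- Enabledness in the net extended with the place `p_r` associated with the region `r`
of the marking graph (the second component of the state is the marking of `p_r`):
`p_r` is an input place of exactly the transitions leaving `r`. -/
def Enabled' (r : Set (Set P)) (x : Set P × Bool) (t : T) : Prop :=
  Enabled pre x.1 t ∧ (Leaves (MGArcs pre post m₀) r t → x.2 = true)

/-- Transition-labeled step relation of the extended net: `p_r` is an output place of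
exactly the transitions entering `r`. -/
def StepT' (r : Set (Set P)) (x : Set P × Bool) (t : T) (y : Set P × Bool) : Prop :=
  Enabled' pre post m₀ r x t ∧ y.1 = fireS pre post x.1 t ∧
    y.2 = (if Enters (MGArcs pre post m₀) r t then true
           else if Leaves (MGArcs pre post m₀) r t then false else x.2)

def Step' (r : Set (Set P)) (x y : Set P × Bool) : Prop := ∃ t, StepT' pre post m₀ r x t y

/-- Reachable markings of the extended net, the new place being initially marked iff the
initial marking belongs to `r`. -/
def Reach' (r : Set (Set P)) (x : Set P × Bool) : Prop :=
  Relation.ReflTransGen (Step' pre post m₀ r) (m₀, if m₀ ∈ r then true else false) x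

lemma stepT_iff_aux {P T : Type*} (pre post : T → Set P) (m₀ : Set P) (r : Set (Set P))
    (hreg : IsRegion (MGArcs pre post m₀) r)
    {m m' : Set P} {t : T} (hm : Reach pre post m₀ m) :
    StepT pre post m t m' ↔
      StepT' pre post m₀ r (m, if m ∈ r then true else false) t
        (m', if m' ∈ r then true else false) := by
  constructor
  · intro h
    have harc : (m, t, m') ∈ MGArcs pre post m₀ := ⟨hm, h⟩
    refine ⟨⟨h.1, ?_⟩, h.2, ?_⟩
    · intro hl; simp [(hl m m' harc).1]
    · rcases hreg t with he | hl | hn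
      · simp [he, (he m m' harc).2]
      · have hne : ¬ Enters (MGArcs pre post m₀) r t := fun he =>
          (hl m m' harc).2 (he m m' harc).2
        simp [hne, hl, (hl m m' harc).2]
      · by_cases he : Enters (MGArcs pre post m₀) r t
        · simp [he, (he m m' harc).2]
        · by_cases hl : Leaves (MGArcs pre post m₀) r t
          · simp [he, hl, (hl m m' harc).2]
          · simp [he, hl, (hn m m' harc)]
  · rintro ⟨⟨hen, -⟩, hf, -⟩
    exact ⟨hen, hf⟩

lemma reach'_of_reach_aux {P T : Type*} (pre post : T → Set P) (m₀ : Set P) (r : Set (Set P))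
    (hreg : IsRegion (MGArcs pre post m₀) r)
    {m : Set P} (hm : Reach pre post m₀ m) :
    Reach' pre post m₀ r (m, if m ∈ r then true else false) := by
  induction hm with
  | refl => exact Relation.ReflTransGen.refl
  | tail hab hbc ih =>
    obtain ⟨t, hst⟩ := hbc
    exact ih.tail ⟨t, (stepT_iff_aux pre post m₀ r hreg hab).1 hst⟩

lemma reach'_iff_aux {P T : Type*} (pre post : T → Set P) (m₀ : Set P) (r : Set (Set P))
    (hreg : IsRegion (MGArcs pre post m₀) r) (x : Set P × Bool) :
    Reach' pre post m₀ r x ↔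
      (Reach pre post m₀ x.1 ∧ (x.2 = true ↔ x.1 ∈ r)) := by
  constructor
  · intro hx
    induction hx with
    | refl =>
      refine ⟨Relation.ReflTransGen.refl, ?_⟩
      by_cases h : m₀ ∈ r <;> simp [h]
    | tail hab hbc ih =>
      rename_i b c
      obtain ⟨t, ⟨hen, hlv⟩, hf, hb'⟩ := hbc
      have hst : StepT pre post b.1 t c.1 := ⟨hen, hf⟩
      have hrc : Reach pre post m₀ c.1 := ih.1.tail ⟨t, hst⟩
      have harc : (b.1, t, c.1) ∈ MGArcs pre post m₀ := ⟨ih.1, hst⟩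
      refine ⟨hrc, ?_⟩
      rcases hreg t with he | hl | hn
      · rw [hb']; simp [he, (he b.1 c.1 harc).2]
      · have hne : ¬ Enters (MGArcs pre post m₀) r t := fun he =>
          (hl b.1 c.1 harc).2 (he b.1 c.1 harc).2
        rw [hb']; simp [hne, hl, (hl b.1 c.1 harc).2]
      · by_cases he : Enters (MGArcs pre post m₀) r t
        · rw [hb']; simp [he, (he b.1 c.1 harc).2]
        · by_cases hl : Leaves (MGArcs pre post m₀) r t
          · rw [hb']; simp [he, hl, (hl b.1 c.1 harc).2]
          · rw [hb']; simp [he, hl]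
            rw [ih.2]; exact hn b.1 c.1 harc
  · rintro ⟨hr, hb⟩
    have hx : x = (x.1, if x.1 ∈ r then true else false) := by
      ext
      · rfl
      · by_cases h : x.1 ∈ r
        · simp [h, hb.2 h]
        · simp only [h, if_false]
          rcases Bool.eq_false_or_eq_true x.2 with h2 | h2
          · exact absurd (hb.1 h2) h
          · exact h2
    rw [hx]
    exact reach'_of_reach_aux pre post m₀ r hreg hr

/-- Adding a place corresponding to a region `r` of the marking graph of a 1-safe net
does not change the reachability graph: enabledness in the extended net coincides with
enabledness of the restriction to the original places, and `m ↦ (m, [m ∈ r])` is an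
isomorphism between the marking graphs of the original and the extended nets. -/
theorem region_place_preserves_marking_graph {P T : Type*}
    (pre post : T → Set P) (m₀ : Set P) (r : Set (Set P))
    (hreg : IsRegion (MGArcs pre post m₀) r) :
    (∀ (x : Set P × Bool) (t : T), Reach' pre post m₀ r x →
        (Enabled' pre post m₀ r x t ↔ Enabled pre x.1 t)) ∧
    (∀ x : Set P × Bool, Reach' pre post m₀ r x ↔
        (Reach pre post m₀ x.1 ∧ (x.2 = true ↔ x.1 ∈ r))) ∧
    (∀ (m m' : Set P) (t : T), Reach pre post m₀ m →
        (StepT pre post m t m' ↔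
          StepT' pre post m₀ r (m, if m ∈ r then true else false) t
            (m', if m' ∈ r then true else false))) := by
  refine ⟨?_, reach'_iff_aux pre post m₀ r hreg, fun m m' t hm =>
    stepT_iff_aux pre post m₀ r hreg hm⟩
  intro x t hx
  obtain ⟨hr, hb⟩ := (reach'_iff_aux pre post m₀ r hreg x).1 hx
  constructor
  · exact fun h => h.1
  · intro hen
    refine ⟨hen, fun hl => ?_⟩
    have harc : (x.1, t, fireS pre post x.1 t) ∈ MGArcs pre post m₀ :=
      ⟨hr, hen, rfl⟩
    exact hb.2 (hl _ _ harc).1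

end Net
end
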